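/- Let A : ℝ → Matrix (Fin J) (Fin J) ℝ be continuous on [a,t], and let B(s,t) = ∑_{m=0}^∞ I_m(s,t) be the Peano–Baker series of A. Then for all a ≤ s ≤ t, B satisfies the two Volterra integral equations B(s,t) = Id + ∫_s^t A(x) B(x,t) dx and B(s,t) = Id + ∫_s^t B(s,x) A(x) dx. -/

import Mathlib

/-!
If `‖A‖ ≤ M` on `[s, t]`, the iterated integrals obey `‖I_m(x, y)‖ ≤ (M (t - s))^m / m!` for
`s ≤ x ≤ y ≤ t`, so the Peano–Baker series converges uniformly and may be integrated termwise.
Summing the defining recursion `I_{m+1}(s, t) = ∫_s^t I_m(s, x) A(x) dx` over `m` gives the second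
equation. The first comes the same way from the dual recursion
`I_{m+1}(s, t) = ∫_s^t A(x) I_m(x, t) dx`, proved by induction on `m` by exchanging the order of
integration over the triangle `s ≤ y ≤ x ≤ t`. To have joint continuity of the `I_m` at hand,
`A` is first extended continuously from `[s, t]` to `ℝ`; this does not change the `I_m` on `[s, t]`.
-/

open MeasureTheory intervalIntegral

attribute [local instance] Matrix.linftyOpNormedAddCommGroup Matrix.linftyOpNormedSpace
  Matrix.linftyOpNormedRing Matrix.linftyOpNormedAlgebra

/-- Iterated integrals of the Peano-Baker series:
`I_0(s,t) = Id`, `I_{m+1}(s,t) = int_s^t I_m(s,x) A(x) dx`. -/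
noncomputable def iterInt {ι : Type*} [Fintype ι] [DecidableEq ι]
    (A : ℝ → Matrix ι ι ℝ) : ℕ → ℝ → ℝ → Matrix ι ι ℝ
  | 0, _s, _t => 1
  | m + 1, s, t => ∫ x in s..t, iterInt A m s x * A x

/-- The Peano-Baker series (product integral) of `A` over `(s,t]`. -/
noncomputable def peanoBaker {ι : Type*} [Fintype ι] [DecidableEq ι]
    (A : ℝ → Matrix ι ι ℝ) (s t : ℝ) : Matrix ι ι ℝ :=
  ∑' m : ℕ, iterInt A m s t

open Set Filter
open scoped Interval Nat

namespace intervalIntegral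

variable {E : Type*} [NormedAddCommGroup E] [NormedSpace ℝ E]

theorem integral_const_mul_of_intervalIntegrable {R : Type*} [NormedRing R] [NormedAlgebra ℝ R]
    [CompleteSpace R] {f : ℝ → R} {a b : ℝ} (hf : IntervalIntegrable f volume a b) (c : R) :
    ∫ x in a..b, c * f x = c * ∫ x in a..b, f x :=
  (ContinuousLinearMap.mul ℝ R c).intervalIntegral_comp_comm hf

theorem integral_mul_const_of_intervalIntegrable {R : Type*} [NormedRing R] [NormedAlgebra ℝ R]
    [CompleteSpace R] {f : ℝ → R} {a b : ℝ} (hf : IntervalIntegrable f volume a b) (c : R) :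
    ∫ x in a..b, f x * c = (∫ x in a..b, f x) * c :=
  ((ContinuousLinearMap.mul ℝ R).flip c).intervalIntegral_comp_comm hf

theorem integral_indicator_Ici {f : ℝ → E} {a₁ a₂ a₃ : ℝ} (h : a₂ ∈ Ioc a₁ a₃) :
    ∫ x in a₁..a₃, (Ici a₂).indicator f x = ∫ x in a₂..a₃, f x := by
  have : Ici a₂ ∩ Ioc a₁ a₃ = Icc a₂ a₃ := by
    ext x
    simp only [mem_inter_iff, mem_Ici, mem_Ioc, mem_Icc]
    exact ⟨fun ⟨h₂, _, h₃⟩ => ⟨h₂, h₃⟩, fun ⟨h₂, h₃⟩ => ⟨h₂, h.1.trans_le h₂, h₃⟩⟩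
  rw [integral_of_le (h.1.le.trans h.2), integral_of_le h.2,
    MeasureTheory.integral_indicator measurableSet_Ici, Measure.restrict_restrict measurableSet_Ici,
    this, integral_Icc_eq_integral_Ioc]

theorem integral_integral_swap_triangle {G : ℝ → ℝ → E} (hG : Continuous G.uncurry) {s u : ℝ}
    (hsu : s ≤ u) :
    ∫ x in s..u, ∫ y in s..x, G y x = ∫ y in s..u, ∫ x in y..u, G y x := by
  set K : ℝ → ℝ → E := fun x y => {y | y ≤ x}.indicator (G · x) y
  have hK : IntegrableOn K.uncurry (Ι s u ×ˢ Ι s u) := by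
    have hG' : Continuous fun p : ℝ × ℝ => G p.2 p.1 := hG.comp continuous_swap
    refine ((hG'.continuousOn.integrableOn_compact (isCompact_Icc.prod isCompact_Icc)).mono_set
      (prod_mono uIoc_subset_uIcc uIoc_subset_uIcc)).indicator
      (measurableSet_le measurable_snd measurable_fst)
  calc ∫ x in s..u, ∫ y in s..x, G y x
      = ∫ x in s..u, ∫ y in s..u, K x y :=
        integral_congr fun x hx => (integral_indicator (uIcc_of_le hsu ▸ hx)).symm
    _ = ∫ y in s..u, ∫ x in s..u, K x y := intervalIntegral_intervalIntegral_swap hK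
    _ = ∫ y in s..u, ∫ x in y..u, G y x :=
        integral_congr_ae (Eventually.of_forall fun y hy =>
          integral_indicator_Ici (uIoc_of_le hsu ▸ hy))

theorem continuous_parametric_intervalIntegral_of_continuous_of_continuous {X : Type*}
    [TopologicalSpace X] {f : X → ℝ → E} (hf : Continuous f.uncurry) {a b : X → ℝ}
    (ha : Continuous a) (hb : Continuous b) :
    Continuous fun x => ∫ t in a x..b x, f x t := by
  have hint : ∀ x c d, IntervalIntegrable (f x) volume c d := fun x c d =>
    (hf.comp (Continuous.prodMk_right x)).intervalIntegrable c d
  have hsub : (fun x => ∫ t in a x..b x, f x t) =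
      fun x => (∫ t in 0..b x, f x t) - ∫ t in 0..a x, f x t :=
    funext fun x => (integral_interval_sub_left (hint _ _ _) (hint _ _ _)).symm
  rw [hsub]
  exact (continuous_parametric_intervalIntegral_of_continuous hf hb).sub
    (continuous_parametric_intervalIntegral_of_continuous hf ha)

theorem hasSum_integral_of_norm_le_of_summable [CompleteSpace E] {F : ℕ → ℝ → E} {b : ℕ → ℝ}
    {s t : ℝ} (hF : ∀ n, Continuous (F n)) (hFb : ∀ n, ∀ x ∈ uIcc s t, ‖F n x‖ ≤ b n)
    (hb : Summable b) :
    HasSum (fun n => ∫ x in s..t, F n x) (∫ x in s..t, ∑' n, F n x) :=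
  hasSum_integral_of_dominated_convergence (fun n _ => b n)
    (fun n => (hF n).aestronglyMeasurable)
    (fun n => Eventually.of_forall fun x hx => hFb n x (uIoc_subset_uIcc hx))
    (Eventually.of_forall fun _ _ => hb) intervalIntegrable_const
    (Eventually.of_forall fun x hx =>
      (hb.of_norm_bounded fun n => hFb n x (uIoc_subset_uIcc hx)).hasSum)

end intervalIntegral

theorem Matrix.linfty_opNorm_one_le {ι : Type*} [Fintype ι] [DecidableEq ι] :
    ‖(1 : Matrix ι ι ℝ)‖ ≤ 1 := by
  rw [← Matrix.diagonal_one, Matrix.linfty_opNorm_diagonal]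
  exact (pi_norm_const_le (1 : ℝ)).trans norm_one.le

section iterInt

variable {ι : Type*} [Fintype ι] [DecidableEq ι] {A B : ℝ → Matrix ι ι ℝ}

theorem iterInt_congr {a b s : ℝ} (h : EqOn A B (Icc a b)) (hs : s ∈ Icc a b) (m : ℕ) {u : ℝ}
    (hu : u ∈ Icc a b) : iterInt A m s u = iterInt B m s u := by
  induction m generalizing u with
  | zero => rfl
  | succ m ih =>
    refine integral_congr fun x hx => ?_
    have hx' := uIcc_subset_Icc hs hu hx
    exact congrArg₂ (· * ·) (ih hx') (h hx')

theorem peanoBaker_congr {a b s u : ℝ} (h : EqOn A B (Icc a b)) (hs : s ∈ Icc a b)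
    (hu : u ∈ Icc a b) : peanoBaker A s u = peanoBaker B s u :=
  tsum_congr fun m => iterInt_congr h hs m hu

theorem continuous_iterInt (hA : Continuous A) (m : ℕ) :
    Continuous fun p : ℝ × ℝ => iterInt A m p.1 p.2 := by
  induction m with
  | zero => exact continuous_const
  | succ m ih =>
    have hf : Continuous fun q : (ℝ × ℝ) × ℝ => iterInt A m q.1.1 q.2 * A q.2 :=
      (ih.comp (continuous_fst.fst.prodMk continuous_snd)).mul (hA.comp continuous_snd)
    exact continuous_parametric_intervalIntegral_of_continuous_of_continuous
      (f := fun p x => iterInt A m p.1 x * A x) hf continuous_fst continuous_snd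

theorem norm_iterInt_le {M s u : ℝ} (hsu : s ≤ u) (hA : ∀ x ∈ Icc s u, ‖A x‖ ≤ M) (m : ℕ) :
    ‖iterInt A m s u‖ ≤ (M * (u - s)) ^ m / m ! := by
  induction m generalizing u with
  | zero => simpa [iterInt] using Matrix.linfty_opNorm_one_le
  | succ m ih =>
    have hbound : ∀ x ∈ Ioc s u, ‖iterInt A m s x * A x‖ ≤ (M * (x - s)) ^ m / m ! * M := by
      intro x hx
      have hIx := ih hx.1.le fun y hy => hA y ⟨hy.1, hy.2.trans hx.2⟩
      exact (norm_mul_le _ _).trans <|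
        mul_le_mul hIx (hA x (Ioc_subset_Icc_self hx)) (norm_nonneg _) ((norm_nonneg _).trans hIx)
    have hpoly : ∀ x, (M * (x - s)) ^ m / m ! * M = M ^ (m + 1) / m ! * (x - s) ^ m := by
      intro x; rw [mul_pow]; ring
    calc ‖iterInt A (m + 1) s u‖ ≤ ∫ x in s..u, (M * (x - s)) ^ m / m ! * M :=
          norm_integral_le_of_norm_le hsu (ae_of_all _ hbound)
            (Continuous.intervalIntegrable (by fun_prop) _ _)
      _ = (M * (u - s)) ^ (m + 1) / (m + 1)! := by
          simp_rw [hpoly, intervalIntegral.integral_const_mul, integral_comp_sub_right (· ^ m),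
            integral_pow, sub_self, zero_pow m.succ_ne_zero, Nat.factorial_succ, mul_pow]
          push_cast
          field_simp
          ring

theorem norm_iterInt_le_of_le {M s t x y : ℝ} (hA : ∀ z ∈ Icc s t, ‖A z‖ ≤ M) (hsx : s ≤ x)
    (hxy : x ≤ y) (hyt : y ≤ t) (m : ℕ) :
    ‖iterInt A m x y‖ ≤ (M * (t - s)) ^ m / m ! := by
  have hM : 0 ≤ M := (norm_nonneg _).trans (hA x ⟨hsx, hxy.trans hyt⟩)
  refine (norm_iterInt_le hxy (fun z hz => hA z ⟨hsx.trans hz.1, hz.2.trans hyt⟩) m).trans ?_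
  gcongr

theorem summable_iterInt_of_le {M s t x y : ℝ} (hA : ∀ z ∈ Icc s t, ‖A z‖ ≤ M) (hsx : s ≤ x)
    (hxy : x ≤ y) (hyt : y ≤ t) : Summable fun m => iterInt A m x y :=
  (Real.summable_pow_div_factorial _).of_norm_bounded (norm_iterInt_le_of_le hA hsx hxy hyt)

theorem iterInt_succ' (hA : Continuous A) {s u : ℝ} (hsu : s ≤ u) (m : ℕ) :
    iterInt A (m + 1) s u = ∫ x in s..u, A x * iterInt A m x u := by
  induction m generalizing u with
  | zero => simp [iterInt]
  | succ m ih =>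
    have hcont := continuous_iterInt hA m
    calc iterInt A (m + 2) s u = ∫ x in s..u, iterInt A (m + 1) s x * A x := rfl
      _ = ∫ x in s..u, (∫ y in s..x, A y * iterInt A m y x) * A x :=
          integral_congr fun x hx => congrArg (· * A x) (ih (uIcc_of_le hsu ▸ hx).1)
      _ = ∫ x in s..u, ∫ y in s..x, A y * iterInt A m y x * A x :=
          integral_congr fun x _ => (integral_mul_const_of_intervalIntegrable
            (Continuous.intervalIntegrable (by fun_prop) _ _) (A x)).symm
      _ = ∫ y in s..u, ∫ x in y..u, A y * iterInt A m y x * A x :=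
          integral_integral_swap_triangle (by fun_prop) hsu
      _ = ∫ y in s..u, A y * iterInt A (m + 1) y u := by
          refine integral_congr fun y _ => ?_
          simp_rw [mul_assoc]
          exact integral_const_mul_of_intervalIntegrable
            (Continuous.intervalIntegrable (by fun_prop) _ _) (A y)

end iterInt

section peanoBaker

variable {ι : Type*} [Fintype ι] [DecidableEq ι] {A : ℝ → Matrix ι ι ℝ} {s t : ℝ}

theorem peanoBaker_eq_one_add_integral_mul_left (hA : Continuous A) (hst : s ≤ t) :
    peanoBaker A s t = 1 + ∫ x in s..t, A x * peanoBaker A x t := by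
  obtain ⟨M, hM⟩ := isCompact_Icc.exists_bound_of_continuousOn (s := Icc s t) hA.continuousOn
  have hsum : ∀ x ∈ Icc s t, Summable fun m => iterInt A m x t := fun x hx =>
    summable_iterInt_of_le hM hx.1 hx.2 le_rfl
  have hbound :
      ∀ m, ∀ x ∈ uIcc s t, ‖A x * iterInt A m x t‖ ≤ M * ((M * (t - s)) ^ m / m !) := by
    intro m x hx
    rw [uIcc_of_le hst] at hx
    have hI := norm_iterInt_le_of_le hM hx.1 hx.2 le_rfl m
    exact (norm_mul_le _ _).trans
      (mul_le_mul (hM x hx) hI (norm_nonneg _) ((norm_nonneg _).trans (hM x hx)))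
  rw [peanoBaker, (hsum s ⟨le_rfl, hst⟩).tsum_eq_zero_add]
  congr 1
  simp_rw [iterInt_succ' hA hst]
  refine (hasSum_integral_of_norm_le_of_summable (fun m => ?_) hbound
    ((Real.summable_pow_div_factorial _).mul_left M)).tsum_eq.trans
    (integral_congr fun x hx => (hsum x (uIcc_of_le hst ▸ hx)).tsum_mul_left (A x))
  exact hA.mul ((continuous_iterInt hA m).comp (continuous_id.prodMk continuous_const))

theorem peanoBaker_eq_one_add_integral_mul_right (hA : Continuous A) (hst : s ≤ t) :
    peanoBaker A s t = 1 + ∫ x in s..t, peanoBaker A s x * A x := by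
  obtain ⟨M, hM⟩ := isCompact_Icc.exists_bound_of_continuousOn (s := Icc s t) hA.continuousOn
  have hsum : ∀ x ∈ Icc s t, Summable fun m => iterInt A m s x := fun x hx =>
    summable_iterInt_of_le hM le_rfl hx.1 hx.2
  have hbound : ∀ m, ∀ x ∈ uIcc s t, ‖iterInt A m s x * A x‖ ≤ (M * (t - s)) ^ m / m ! * M := by
    intro m x hx
    rw [uIcc_of_le hst] at hx
    have hI := norm_iterInt_le_of_le hM le_rfl hx.1 hx.2 m
    exact (norm_mul_le _ _).trans
      (mul_le_mul hI (hM x hx) (norm_nonneg _) ((norm_nonneg _).trans hI))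
  rw [peanoBaker, (hsum t ⟨hst, le_rfl⟩).tsum_eq_zero_add]
  congr 1
  refine (hasSum_integral_of_norm_le_of_summable (fun m => ?_) hbound
    ((Real.summable_pow_div_factorial _).mul_right M)).tsum_eq.trans
    (integral_congr fun x hx => (hsum x (uIcc_of_le hst ▸ hx)).tsum_mul_right (A x))
  exact ((continuous_iterInt hA m).comp (continuous_const.prodMk continuous_id)).mul hA

theorem peanoBaker_volterra_of_continuousOn (hA : ContinuousOn A (Icc s t)) (hst : s ≤ t) :
    peanoBaker A s t = 1 + ∫ x in s..t, A x * peanoBaker A x t ∧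
      peanoBaker A s t = 1 + ∫ x in s..t, peanoBaker A s x * A x := by
  obtain ⟨A', hA', hAA'⟩ : ∃ A' : ℝ → Matrix ι ι ℝ, Continuous A' ∧ EqOn A A' (Icc s t) :=
    ⟨IccExtend hst ((Icc s t).domRestrict A), hA.domRestrict.Icc_extend',
      fun x hx => (IccExtend_of_mem hst ((Icc s t).domRestrict A) hx).symm⟩
  have hB {x y} (hx : x ∈ Icc s t) (hy : y ∈ Icc s t) : peanoBaker A x y = peanoBaker A' x y :=
    peanoBaker_congr hAA' hx hy
  have hs : s ∈ Icc s t := left_mem_Icc.2 hst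
  have ht : t ∈ Icc s t := right_mem_Icc.2 hst
  rw [hB hs ht]
  refine ⟨(peanoBaker_eq_one_add_integral_mul_left hA' hst).trans ?_,
    (peanoBaker_eq_one_add_integral_mul_right hA' hst).trans ?_⟩ <;> congr 1 <;>
    refine integral_congr fun x hx => ?_ <;> rw [uIcc_of_le hst] at hx <;>
    simp only [hAA' hx, hB hx ht, hB hs hx]

end peanoBaker

/-- the Peano-Baker series satisfies both Volterra integral equations
`B(s,t) = Id + ∫_s^t A(x) B(x,t) dx` and `B(s,t) = Id + ∫_s^t B(s,x) A(x) dx`. -/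
theorem peanoBaker_volterra {J : ℕ}
    (A : ℝ → Matrix (Fin J) (Fin J) ℝ) (a t : ℝ)
    (hA : ContinuousOn A (Set.Icc a t)) :
    ∀ s, a ≤ s → s ≤ t →
      peanoBaker A s t = 1 + ∫ x in s..t, A x * peanoBaker A x t ∧
      peanoBaker A s t = 1 + ∫ x in s..t, peanoBaker A s x * A x := by
  intro s has hst
  exact peanoBaker_volterra_of_continuousOn (hA.mono (Set.Icc_subset_Icc_left has)) hst
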